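/- arXiv:2401.00257 — 5 statements merged into one kernel-verified Lean document; each statement's English description precedes it below -/
import Mathlib

section
/- Let θ̂_r | θ ~ N(θ, σ_r²) with σ_r² known. Under H_0: θ = 0 the marginal density of θ̂_r is N(θ̂_r; 0, σ_r²), and under H_A: θ ~ N(θ̂_o, σ_o²) the marginal density is N(θ̂_r; θ̂_o, σ_o² + σ_r²). Then the Bayes factor BF_R = N(θ̂_r; 0, σ_r²)/N(θ̂_r; θ̂_o, σ_o² + σ_r²) equals √(1+c) · exp{ -(z_o²/2)·( d²c − (1−d)²/(1/c + 1) ) }, where z_o = θ̂_o/σ_o, d = θ̂_r/θ̂_o, c = σ_o²/σ_r², assuming θ̂_o ≠ 0. -/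
open MeasureTheory ProbabilityTheory Filter Real Topology

noncomputable def nd (x μ τ2 : ℝ) : ℝ :=
  (Real.sqrt (2 * Real.pi * τ2))⁻¹ * Real.exp (-(x - μ) ^ 2 / (2 * τ2))

noncomputable def G1 (u : ℝ) : ℝ :=
  ((gaussianReal 0 1) {x | x ^ 2 ≤ u}).toReal

theorem stmt0 (θo σo σr θr zo d c : ℝ) (hθo : θo ≠ 0) (hσo : 0 < σo) (hσr : 0 < σr)
    (hz : zo = θo / σo) (hd : d = θr / θo) (hc : c = σo ^ 2 / σr ^ 2) :
    nd θr 0 (σr ^ 2) / nd θr θo (σo ^ 2 + σr ^ 2) =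
      Real.sqrt (1 + c) *
        Real.exp (-(zo ^ 2 / 2) * (d ^ 2 * c - (1 - d) ^ 2 / (1 / c + 1))) := by
  subst hz hd hc
  have hσr2 : (0:ℝ) < σr ^ 2 := by positivity
  have hs : (0:ℝ) < σo ^ 2 + σr ^ 2 := by positivity
  unfold nd
  rw [div_eq_iff (by positivity)]
  have hE : -(θr - 0) ^ 2 / (2 * σr ^ 2) =
      -((θo / σo) ^ 2 / 2) * ((θr / θo) ^ 2 * (σo ^ 2 / σr ^ 2) -
        (1 - θr / θo) ^ 2 / (1 / (σo ^ 2 / σr ^ 2) + 1)) +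
      -(θr - θo) ^ 2 / (2 * (σo ^ 2 + σr ^ 2)) := by
    field_simp
    ring
  have h2 : (Real.sqrt (2 * Real.pi * σr ^ 2))⁻¹ =
      Real.sqrt (1 + σo ^ 2 / σr ^ 2) * (Real.sqrt (2 * Real.pi * (σo ^ 2 + σr ^ 2)))⁻¹ := by
    rw [← Real.sqrt_inv, ← Real.sqrt_inv,
      ← Real.sqrt_mul (by positivity : (0:ℝ) ≤ 1 + σo ^ 2 / σr ^ 2)]
    congr 1
    field_simp
    ring
  rw [hE, Real.exp_add, h2]
  ring
end

section
/- Fix θ* ≠ 0 and σ² > 0, and let σ_r(n)² = σ²/n. Assume θ̂_r^{(n)} → θ* in probability with θ̂_r^{(n)} | θ* ~ N(θ*, σ²/n). Then the replication Bayes factor BF_R^{(n)} = N(θ̂_r^{(n)}; 0, σ²/n)/N(θ̂_r^{(n)}; θ̂_o, σ_o² + σ²/n) converges to 0 in probability as n → ∞, at rate exp{−K n} for some constant K > 0 (when θ* ≠ θ̂_o one may take any K < (θ*)²/(2σ²)). -/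
open MeasureTheory ProbabilityTheory Filter Real Topology

lemma gauss_tail (m : ℝ) (v : NNReal) (hv : v ≠ 0) (δ : ℝ) (hδ : 0 < δ) :
    gaussianReal m v {x | δ ≤ |x - m|} ≤
      ENNReal.ofReal (Real.sqrt 2 * Real.exp (-δ ^ 2 / (4 * v))) := by
  have hv' : (0:ℝ) < v := lt_of_le_of_ne v.coe_nonneg (by exact_mod_cast hv.symm)
  rw [gaussianReal_apply m hv]
  have h2v : (2 * v : NNReal) ≠ 0 := by positivity
  set c : ℝ := Real.sqrt 2 * Real.exp (-δ ^ 2 / (4 * v)) with hc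
  have hcpos : 0 < c := by positivity
  calc ∫⁻ x in {x | δ ≤ |x - m|}, gaussianPDF m v x
      ≤ ∫⁻ x in {x | δ ≤ |x - m|}, ENNReal.ofReal c * gaussianPDF m (2 * v) x := by
        refine setLIntegral_mono ((measurable_gaussianPDF m (2*v)).const_mul _) ?_
        intro x hx
        simp only [Set.mem_setOf_eq] at hx
        rw [gaussianPDF_def, gaussianPDF_def, ← ENNReal.ofReal_mul hcpos.le]
        refine ENNReal.ofReal_le_ofReal ?_
        have key : gaussianPDFReal m v x ≤ c * gaussianPDFReal m (2 * v) x := by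
          rw [gaussianPDFReal, gaussianPDFReal]
          have hcast : ((2 * v : NNReal) : ℝ) = 2 * (v : ℝ) := by push_cast; ring
          rw [hcast]
          have hsq : √(2 * π * (2 * (v:ℝ))) = Real.sqrt 2 * √(2 * π * v) := by
            rw [← Real.sqrt_mul (by norm_num)]
            ring_nf
          rw [hsq]
          have hδ2 : δ ^ 2 ≤ (x - m) ^ 2 := by
            have := sq_le_sq' (by linarith [abs_nonneg (x-m), neg_abs_le (x-m)] : -(|x-m|) ≤ δ) hx
            calc δ^2 ≤ |x-m|^2 := this
            _ = (x-m)^2 := sq_abs _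
          have hexp : Real.exp (-(x - m) ^ 2 / (2 * v)) ≤
              Real.exp (-δ ^ 2 / (4 * v)) * Real.exp (-(x - m) ^ 2 / (2 * (2 * v))) := by
            rw [← Real.exp_add]
            apply Real.exp_le_exp.mpr
            rw [div_add_div _ _ (by positivity) (by positivity)]
            rw [div_le_div_iff₀ (by positivity) (by positivity)]
            nlinarith [hδ2, mul_pos hv' hv', mul_le_mul_of_nonneg_left hδ2 (mul_pos hv' hv').le]
          calc (√(2 * π * v))⁻¹ * rexp (-(x - m) ^ 2 / (2 * v))
              ≤ (√(2 * π * v))⁻¹ * (rexp (-δ ^ 2 / (4 * v)) * rexp (-(x - m) ^ 2 / (2 * (2*v)))) := by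
                apply mul_le_mul_of_nonneg_left hexp (by positivity)
            _ = c * ((Real.sqrt 2 * √(2 * π * v))⁻¹ * rexp (-(x - m) ^ 2 / (2 * (2 * (v:ℝ))))) := by
                rw [hc, mul_inv]
                have h2 : (Real.sqrt 2) * (Real.sqrt 2)⁻¹ = 1 :=
                  mul_inv_cancel₀ (by positivity)
                field_simp
        exact key
    _ ≤ ∫⁻ x, ENNReal.ofReal c * gaussianPDF m (2 * v) x :=
        setLIntegral_le_lintegral _ _
    _ = ENNReal.ofReal c * ∫⁻ x, gaussianPDF m (2 * v) x :=
        lintegral_const_mul _ (measurable_gaussianPDF m (2*v))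
    _ = ENNReal.ofReal c := by rw [lintegral_gaussianPDF_eq_one m h2v, mul_one]

lemma seq_lim (C c : ℝ) (hC : 0 ≤ C) (hc : 0 < c) :
    Tendsto (fun n : ℕ => C * Real.sqrt n * Real.exp (-(c * n))) atTop (𝓝 0) := by
  have h1 : Tendsto (fun x : ℝ => x * Real.exp (-x)) atTop (𝓝 0) := by
    simpa using Real.tendsto_pow_mul_exp_neg_atTop_nhds_zero 1
  have h2 : Tendsto (fun x : ℝ => (c * x) * Real.exp (-(c * x))) atTop (𝓝 0) :=
    h1.comp (tendsto_id.const_mul_atTop hc)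
  have h3 : Tendsto (fun x : ℝ => C * x * Real.exp (-(c * x))) atTop (𝓝 0) := by
    have := h2.const_mul (C / c)
    rw [mul_zero] at this
    refine this.congr fun x => ?_
    field_simp
  have h4 : Tendsto (fun x : ℝ => C * Real.sqrt x * Real.exp (-(c * x))) atTop (𝓝 0) := by
    refine squeeze_zero' ?_ ?_ h3
    · filter_upwards [eventually_ge_atTop (0:ℝ)] with x hx
      positivity
    · filter_upwards [eventually_ge_atTop (1:ℝ)] with x hx
      have hs : Real.sqrt x ≤ x := by
        nlinarith [Real.sq_sqrt (by linarith : (0:ℝ) ≤ x), Real.sqrt_nonneg x,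
          Real.sqrt_le_sqrt (by nlinarith : x ≤ x ^ 2)]
      have := mul_le_mul_of_nonneg_left hs hC
      exact mul_le_mul_of_nonneg_right this (Real.exp_nonneg _)
  exact h4.comp tendsto_natCast_atTop_atTop

lemma ratio_bound (θs θo σo : ℝ) (σ2 : NNReal) (hσo : 0 < σo)
    (hσ2 : 0 < σ2) (δ : ℝ) (hδθ : δ < |θs|) (n : ℕ) (hn : 1 ≤ n)
    (x : ℝ) (hx : |x - θs| < δ) :
    nd x 0 ((σ2 : ℝ) / n) / nd x θo (σo ^ 2 + (σ2 : ℝ) / n) ≤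
      (Real.sqrt n * (Real.sqrt (2 * Real.pi * σ2))⁻¹ *
          Real.exp (-((|θs| - δ) ^ 2 / (2 * σ2)) * n)) /
        ((Real.sqrt (2 * Real.pi * (σo ^ 2 + σ2)))⁻¹ *
          Real.exp (-(|θs| + δ + |θo|) ^ 2 / (2 * σo ^ 2))) := by
  have hσ2' : (0:ℝ) < σ2 := hσ2
  have hn' : (0:ℝ) < n := by exact_mod_cast hn
  have hn1 : (1:ℝ) ≤ n := by exact_mod_cast hn
  set τ : ℝ := (σ2 : ℝ) / n with hτ
  have hτpos : 0 < τ := by positivity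
  have hτle : τ ≤ σ2 := by
    rw [hτ]; exact div_le_self hσ2'.le hn1
  have hxabs : |θs| - δ ≤ |x| := by
    have h1 : |θs| - |x| ≤ |θs - x| := abs_sub_abs_le_abs_sub θs x
    have h2 : |θs - x| = |x - θs| := abs_sub_comm θs x
    linarith
  have hx2 : (|θs| - δ) ^ 2 ≤ x ^ 2 := by
    have h0 : (0:ℝ) ≤ |θs| - δ := by linarith
    calc (|θs| - δ) ^ 2 ≤ |x| ^ 2 := by nlinarith [abs_nonneg x]
      _ = x ^ 2 := sq_abs x
  have hnum : nd x 0 τ ≤ Real.sqrt n * (Real.sqrt (2 * Real.pi * σ2))⁻¹ *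
      Real.exp (-((|θs| - δ) ^ 2 / (2 * σ2)) * n) := by
    unfold nd
    have hsqrt : (Real.sqrt (2 * Real.pi * τ))⁻¹ =
        Real.sqrt n * (Real.sqrt (2 * Real.pi * σ2))⁻¹ := by
      rw [hτ, show 2 * Real.pi * ((σ2:ℝ) / n) = (2 * Real.pi * σ2) / n by ring,
        Real.sqrt_div (by positivity)]
      rw [div_eq_mul_inv, mul_inv, inv_inv, mul_comm]
    rw [hsqrt, sub_zero]
    have hexp : Real.exp (-x ^ 2 / (2 * τ)) ≤
        Real.exp (-((|θs| - δ) ^ 2 / (2 * σ2)) * n) := by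
      apply Real.exp_le_exp.mpr
      rw [hτ, show (2:ℝ) * ((σ2:ℝ)/n) = (2 * σ2) / n by ring, div_div_eq_mul_div]
      rw [show -((|θs| - δ) ^ 2 / (2 * (σ2:ℝ))) * n = -(|θs| - δ) ^ 2 * n / (2 * σ2) by ring]
      apply div_le_div_of_nonneg_right ?_ (by positivity)
      · nlinarith
    exact mul_le_mul_of_nonneg_left hexp (by positivity)
  set M : ℝ := (|θs| + δ + |θo|) ^ 2 with hM
  set c3 : ℝ := (Real.sqrt (2 * Real.pi * (σo ^ 2 + σ2)))⁻¹ *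
      Real.exp (-M / (2 * σo ^ 2)) with hc3
  have hc3pos : 0 < c3 := by rw [hc3]; positivity
  have hden : c3 ≤ nd x θo (σo ^ 2 + τ) := by
    unfold nd
    have h1 : (Real.sqrt (2 * Real.pi * (σo ^ 2 + σ2)))⁻¹ ≤
        (Real.sqrt (2 * Real.pi * (σo ^ 2 + τ)))⁻¹ := by
      apply inv_anti₀ (by positivity)
      apply Real.sqrt_le_sqrt
      nlinarith [Real.pi_pos]
    have hxθo : |x - θo| ≤ |θs| + δ + |θo| := by
      calc |x - θo| = |(x - θs) + (θs - θo)| := by ring_nf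
        _ ≤ |x - θs| + |θs - θo| := abs_add_le _ _
        _ ≤ δ + (|θs| + |θo|) := by
            linarith [abs_sub θs θo]
        _ = |θs| + δ + |θo| := by ring
    have hxθo2 : (x - θo) ^ 2 ≤ M := by
      rw [hM, ← sq_abs (x - θo)]
      have h0 : (0:ℝ) ≤ |x - θo| := abs_nonneg _
      nlinarith
    have h2 : Real.exp (-M / (2 * σo ^ 2)) ≤ Real.exp (-(x - θo) ^ 2 / (2 * (σo ^ 2 + τ))) := by
      apply Real.exp_le_exp.mpr
      rw [neg_div, neg_div, neg_le_neg_iff]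
      apply div_le_div₀ (by nlinarith [abs_nonneg θs, abs_nonneg θo]) hxθo2 (by positivity)
      nlinarith
    calc c3 ≤ (Real.sqrt (2 * Real.pi * (σo ^ 2 + σ2)))⁻¹ *
          Real.exp (-(x - θo) ^ 2 / (2 * (σo ^ 2 + τ))) := by
          rw [hc3]; exact mul_le_mul_of_nonneg_left h2 (by positivity)
      _ ≤ (Real.sqrt (2 * Real.pi * (σo ^ 2 + τ)))⁻¹ *
          Real.exp (-(x - θo) ^ 2 / (2 * (σo ^ 2 + τ))) :=
          mul_le_mul_of_nonneg_right h1 (Real.exp_nonneg _)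
  exact div_le_div₀ (by positivity) hnum hc3pos hden

lemma main_aux (θs θo σo : ℝ) (σ2 : NNReal) (hθs : θs ≠ 0) (hσo : 0 < σo) (hσ2 : 0 < σ2)
    (K : ℝ) (hK : 0 < K) (hK2 : K < θs ^ 2 / (2 * (σ2 : ℝ))) (ε : ℝ) (hε : 0 < ε) :
    Tendsto (fun n : ℕ =>
        (gaussianReal θs (σ2 / n)) {x | ε ≤ Real.exp (K * n) *
          (nd x 0 ((σ2 : ℝ) / n) / nd x θo (σo ^ 2 + (σ2 : ℝ) / n))})
      atTop (𝓝 0) := by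
  have hσ2' : (0:ℝ) < σ2 := hσ2
  have habs : 0 < |θs| := abs_pos.mpr hθs
  have h2K : 2 * K * (σ2:ℝ) < θs ^ 2 := by
    rw [lt_div_iff₀ (by positivity)] at hK2; linarith
  have hs : Real.sqrt (2 * K * σ2) < |θs| := by
    have h := Real.sqrt_lt_sqrt (by positivity) h2K
    rwa [Real.sqrt_sq_eq_abs] at h
  set δ : ℝ := (|θs| - Real.sqrt (2 * K * σ2)) / 2 with hδdef
  have hsnn : 0 ≤ Real.sqrt (2 * K * σ2) := Real.sqrt_nonneg _
  have hδpos : 0 < δ := by rw [hδdef]; linarith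
  have hδθ : δ < |θs| := by rw [hδdef]; linarith
  have hgap : Real.sqrt (2 * K * σ2) < |θs| - δ := by rw [hδdef]; linarith
  set a : ℝ := (|θs| - δ) ^ 2 / (2 * (σ2:ℝ)) with hadef
  have hKa : K < a := by
    have h1 : 2 * K * (σ2:ℝ) < (|θs| - δ) ^ 2 := by
      nlinarith [Real.sq_sqrt (show (0:ℝ) ≤ 2 * K * σ2 by positivity)]
    rw [hadef, lt_div_iff₀ (by positivity)]; linarith
  set c3 : ℝ := (Real.sqrt (2 * Real.pi * (σo ^ 2 + σ2)))⁻¹ *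
      Real.exp (-(|θs| + δ + |θo|) ^ 2 / (2 * σo ^ 2)) with hc3
  have hc3pos : 0 < c3 := by rw [hc3]; positivity
  set C : ℝ := (Real.sqrt (2 * Real.pi * σ2))⁻¹ / c3 with hC
  have hCpos : 0 < C := by rw [hC]; positivity
  have hb : Tendsto (fun n : ℕ => C * Real.sqrt n * Real.exp (-((a - K) * n))) atTop (𝓝 0) :=
    seq_lim C (a - K) hCpos.le (sub_pos.mpr hKa)
  have hbev : ∀ᶠ n : ℕ in atTop, C * Real.sqrt n * Real.exp (-((a - K) * n)) < ε :=
    hb.eventually_lt_const hε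
  -- the tail bound sequence
  have htail : Tendsto (fun n : ℕ =>
      ENNReal.ofReal (Real.sqrt 2 * Real.exp (-(δ ^ 2) * n / (4 * σ2)))) atTop (𝓝 0) := by
    have hexp : Tendsto (fun n : ℕ => -(δ ^ 2) * n / (4 * (σ2:ℝ))) atTop atBot := by
      have h0 : Tendsto (fun n : ℕ => (δ ^ 2 / (4 * (σ2:ℝ))) * n) atTop atTop :=
        Tendsto.const_mul_atTop (by positivity) tendsto_natCast_atTop_atTop
      refine (tendsto_neg_atTop_atBot.comp h0).congr fun n => ?_
      simp; ring
    have h1 : Tendsto (fun n : ℕ => Real.sqrt 2 * Real.exp (-(δ ^ 2) * n / (4 * (σ2:ℝ))))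
        atTop (𝓝 0) := by
      have := (Real.tendsto_exp_atBot.comp hexp).const_mul (Real.sqrt 2)
      simpa using this
    have h2 := (ENNReal.continuous_ofReal.tendsto 0).comp h1
    rw [ENNReal.ofReal_zero] at h2; exact h2
  refine tendsto_of_tendsto_of_tendsto_of_le_of_le' tendsto_const_nhds htail
    (Eventually.of_forall fun n => zero_le) ?_
  filter_upwards [eventually_ge_atTop 1, hbev] with n hn hbn
  have hn' : (0:ℝ) < n := by exact_mod_cast hn
  have hnne : (n:ℕ) ≠ 0 := by omega
  have hvne : (σ2 / n : NNReal) ≠ 0 := by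
    refine div_ne_zero hσ2.ne' ?_
    exact_mod_cast hnne
  have hsub : {x : ℝ | ε ≤ Real.exp (K * n) *
      (nd x 0 ((σ2 : ℝ) / n) / nd x θo (σo ^ 2 + (σ2 : ℝ) / n))} ⊆
      {x : ℝ | δ ≤ |x - θs|} := by
    intro x hx
    simp only [Set.mem_setOf_eq] at hx ⊢
    by_contra h
    push_neg at h
    have hr := ratio_bound θs θo σo σ2 hσo hσ2 δ hδθ n hn x h
    have hexpeq : Real.exp (K * n) * Real.exp (-((|θs| - δ) ^ 2 / (2 * (σ2:ℝ))) * n) =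
        Real.exp (-((a - K) * n)) := by
      rw [← Real.exp_add, hadef]; ring_nf
    have h2 : Real.exp (K * n) *
        (nd x 0 ((σ2 : ℝ) / n) / nd x θo (σo ^ 2 + (σ2 : ℝ) / n)) ≤
        C * Real.sqrt n * Real.exp (-((a - K) * n)) := by
      calc Real.exp (K * n) *
            (nd x 0 ((σ2 : ℝ) / n) / nd x θo (σo ^ 2 + (σ2 : ℝ) / n))
          ≤ Real.exp (K * n) *
            ((Real.sqrt n * (Real.sqrt (2 * Real.pi * σ2))⁻¹ *
                Real.exp (-((|θs| - δ) ^ 2 / (2 * σ2)) * n)) / c3) := by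
            exact mul_le_mul_of_nonneg_left hr (Real.exp_nonneg _)
        _ = C * Real.sqrt n *
              (Real.exp (K * n) * Real.exp (-((|θs| - δ) ^ 2 / (2 * σ2)) * n)) := by
            rw [hC]; field_simp
        _ = C * Real.sqrt n * Real.exp (-((a - K) * n)) := by rw [hexpeq]
    linarith
  calc (gaussianReal θs (σ2 / n)) {x | ε ≤ Real.exp (K * n) *
        (nd x 0 ((σ2 : ℝ) / n) / nd x θo (σo ^ 2 + (σ2 : ℝ) / n))}
      ≤ (gaussianReal θs (σ2 / n)) {x | δ ≤ |x - θs|} := measure_mono hsub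
    _ ≤ ENNReal.ofReal (Real.sqrt 2 * Real.exp (-δ ^ 2 / (4 * ((σ2 / n : NNReal) : ℝ)))) :=
        gauss_tail θs (σ2 / n) hvne δ hδpos
    _ = ENNReal.ofReal (Real.sqrt 2 * Real.exp (-(δ ^ 2) * n / (4 * σ2))) := by
        congr 2
        rw [NNReal.coe_div]
        push_cast
        field_simp

theorem stmt2 (θs θo σo : ℝ) (σ2 : NNReal) (hθs : θs ≠ 0) (hσo : 0 < σo) (hσ2 : 0 < σ2) :
    (∃ K : ℝ, 0 < K ∧ ∀ ε : ℝ, 0 < ε →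
      Tendsto (fun n : ℕ =>
          (gaussianReal θs (σ2 / n)) {x | ε ≤ Real.exp (K * n) *
            (nd x 0 ((σ2 : ℝ) / n) / nd x θo (σo ^ 2 + (σ2 : ℝ) / n))})
        atTop (𝓝 0)) ∧
    (θs ≠ θo → ∀ K : ℝ, 0 < K → K < θs ^ 2 / (2 * (σ2 : ℝ)) → ∀ ε : ℝ, 0 < ε →
      Tendsto (fun n : ℕ =>
          (gaussianReal θs (σ2 / n)) {x | ε ≤ Real.exp (K * n) *
            (nd x 0 ((σ2 : ℝ) / n) / nd x θo (σo ^ 2 + (σ2 : ℝ) / n))})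
        atTop (𝓝 0)) := by
  have hσ2' : (0:ℝ) < σ2 := hσ2
  have hθs2 : (0:ℝ) < θs ^ 2 := by positivity
  constructor
  · refine ⟨θs ^ 2 / (4 * (σ2:ℝ)), by positivity, fun ε hε => ?_⟩
    refine main_aux θs θo σo σ2 hθs hσo hσ2 _ (by positivity) ?_ ε hε
    rw [div_lt_div_iff₀ (by positivity) (by positivity)]
    nlinarith
  · intro _ K hK hK2 ε hε
    exact main_aux θs θo σo σ2 hθs hσo hσ2 K hK hK2 ε hε
end

section
/- Fix θ* = 0 and σ² > 0, and let θ̂_r^{(n)} | θ* ~ N(0, σ²/n). Then the replication Bayes factor BF_R^{(n)} = N(θ̂_r^{(n)}; 0, σ²/n)/N(θ̂_r^{(n)}; θ̂_o, σ_o² + σ²/n) converges to ∞ in probability as n → ∞, and more precisely BF_R^{(n)}/√n converges in distribution to a positive random variable; in particular BF_R^{(n)} grows at rate O(√n). -/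
open MeasureTheory ProbabilityTheory Filter Real Topology

/-!
Writing the replication estimate as `x = √(σ²/n) z` with `z ~ N(0, 1)`, the Bayes factor becomes
`√((σₒ² + σ²/n) / (σ²/n)) · exp((√(σ²/n) z - θₒ)² / (2(σₒ² + σ²/n)) - z²/2)`.
Its first factor is of exact order `√n`, so `BF / √n` converges pointwise in `z` to
`(σₒ/σ) exp(θₒ²/(2σₒ²) - z²/2) > 0`, and dominated convergence gives the convergence in distribution.
Dropping the nonnegative part of the exponent, `BF ≥ (σₒ/√(σ²/n)) exp(-z²/2)`, so `BF ≤ M` forces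
`exp(-z²/2)` below a threshold of order `1/√n`, an event whose probability vanishes.
-/

open scoped NNReal

lemma tendsto_measure_setOf_le_nhdsGT_zero {α : Type*} [MeasurableSpace α] (μ : Measure α)
    [IsFiniteMeasure μ] {g : α → ℝ} (hg : Measurable g) (hg_pos : ∀ a, 0 < g a) :
    Tendsto (fun δ => μ {a | g a ≤ δ}) (𝓝[>] 0) (𝓝 0) := by
  have hempty : (⋂ δ > (0 : ℝ), {a | g a ≤ δ}) = ∅ := by
    ext a
    simp only [Set.mem_iInter, Set.mem_ofPred_eq, Set.mem_empty_iff_false, iff_false, not_forall,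
      not_le]
    exact ⟨g a / 2, half_pos (hg_pos a), half_lt_self (hg_pos a)⟩
  have h := tendsto_measure_biInter_gt (μ := μ) (s := fun δ : ℝ => {a | g a ≤ δ}) (a := 0)
    (fun δ _ => (measurableSet_le hg measurable_const).nullMeasurableSet)
    (fun _ _ _ hij _ ha => le_trans ha hij) ⟨1, one_pos, measure_ne_top _ _⟩
  rwa [hempty, measure_empty] at h

lemma tendsto_integral_comp_of_tendsto {α ι : Type*} [MeasurableSpace α] (μ : Measure α)
    [IsFiniteMeasure μ] {l : Filter ι} [l.IsCountablyGenerated] {h : ι → α → ℝ} {g : α → ℝ}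
    (hh : ∀ i, Measurable (h i)) (hlim : ∀ a, Tendsto (fun i => h i a) l (𝓝 (g a)))
    (f : BoundedContinuousFunction ℝ ℝ) :
    Tendsto (fun i => ∫ a, f (h i a) ∂μ) l (𝓝 (∫ a, f (g a) ∂μ)) :=
  tendsto_integral_filter_of_dominated_convergence (fun _ => ‖f‖)
    (Eventually.of_forall fun i => (f.continuous.measurable.comp (hh i)).aestronglyMeasurable)
    (Eventually.of_forall fun _ => Eventually.of_forall fun _ => f.norm_coe_le_norm _)
    (integrable_const _)
    (Eventually.of_forall fun a => (f.continuous.tendsto _).comp (hlim a))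

lemma gaussianReal_zero_eq_map_sqrt_mul (v : ℝ≥0) :
    gaussianReal 0 v = (gaussianReal 0 1).map (fun z => √(v : ℝ) * z) := by
  rw [gaussianReal_map_const_mul]
  congr 1
  · ring
  · ext
    simp [Real.sq_sqrt v.coe_nonneg]

lemma measurable_nd (μ τ2 : ℝ) : Measurable (fun x => nd x μ τ2) := by
  unfold nd; fun_prop

lemma nd_zero_div_nd (x θ : ℝ) {τ s : ℝ} (hτ : 0 < τ) (hs : 0 < s) :
    nd x 0 τ / nd x θ s = √(s / τ) * exp ((x - θ) ^ 2 / (2 * s) - x ^ 2 / (2 * τ)) := by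
  have h1 : 0 < √(2 * π * τ) := Real.sqrt_pos.2 (by positivity)
  have h2 : 0 < √(2 * π * s) := Real.sqrt_pos.2 (by positivity)
  unfold nd
  rw [Real.exp_sub, sub_zero, neg_div, neg_div, Real.exp_neg, Real.exp_neg]
  field_simp
  rw [← Real.sqrt_mul (by positivity)]
  congr 1
  field_simp

/-- `BF_R` for a replication estimate `x` with variance `τ = σ²/n`. -/
noncomputable def replicationBF (θo σo τ x : ℝ) : ℝ :=
  nd x 0 τ / nd x θo (σo ^ 2 + τ)

section replicationBF

variable {θo σo τ : ℝ}

lemma measurable_replicationBF : Measurable (replicationBF θo σo τ) :=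
  (measurable_nd _ _).div (measurable_nd _ _)

lemma replicationBF_sqrt_mul (hτ : 0 < τ) (z : ℝ) :
    replicationBF θo σo τ (√τ * z) =
      √((σo ^ 2 + τ) / τ) * exp ((√τ * z - θo) ^ 2 / (2 * (σo ^ 2 + τ)) - z ^ 2 / 2) := by
  have hz : (√τ * z) ^ 2 / (2 * τ) = z ^ 2 / 2 := by
    rw [mul_pow, Real.sq_sqrt hτ.le]
    field_simp
  rw [replicationBF, nd_zero_div_nd _ _ hτ (by positivity), hz]

lemma div_sqrt_mul_exp_le_replicationBF_sqrt_mul (hτ : 0 < τ) (z : ℝ) :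
    σo / √τ * exp (-z ^ 2 / 2) ≤ replicationBF θo σo τ (√τ * z) := by
  rw [replicationBF_sqrt_mul hτ]
  gcongr
  · calc σo / √τ ≤ |σo| / √τ := by gcongr; exact le_abs_self σo
      _ = √(σo ^ 2 / τ) := by rw [Real.sqrt_div (sq_nonneg σo), Real.sqrt_sq_eq_abs]
      _ ≤ √((σo ^ 2 + τ) / τ) := by gcongr; linarith
  · have : 0 ≤ (√τ * z - θo) ^ 2 / (2 * (σo ^ 2 + τ)) := by positivity
    linarith

lemma tendsto_gaussianReal_replicationBF_le (θo : ℝ) (σ2 : ℝ≥0) (hσo : 0 < σo) (hσ2 : 0 < σ2)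
    (M : ℝ) :
    Tendsto (fun n : ℕ => gaussianReal 0 (σ2 / n) {x | replicationBF θo σo ((σ2 : ℝ) / n) x ≤ M})
      atTop (𝓝 0) := by
  set M' := max M 1
  have hsqrt : Tendsto (fun n : ℕ => √((σ2 : ℝ) / n)) atTop (𝓝 0) := by
    simpa using (tendsto_const_div_atTop_nhds_zero_nat (σ2 : ℝ)).sqrt
  have hδ : Tendsto (fun n : ℕ => M' * √((σ2 : ℝ) / n) / σo) atTop (𝓝[>] 0) := by
    refine tendsto_nhdsWithin_iff.2 ⟨by simpa using (hsqrt.const_mul M').div_const σo, ?_⟩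
    filter_upwards [eventually_gt_atTop 0] with n hn
    have hM' : 0 < M' := lt_max_of_lt_right one_pos
    exact div_pos (mul_pos hM' (Real.sqrt_pos.2 (by positivity))) hσo
  refine tendsto_of_tendsto_of_tendsto_of_le_of_le' tendsto_const_nhds
    ((tendsto_measure_setOf_le_nhdsGT_zero (gaussianReal 0 1) (by fun_prop)
      fun z => exp_pos (-z ^ 2 / 2)).comp hδ) (Eventually.of_forall fun _ => zero_le) ?_
  filter_upwards [eventually_gt_atTop 0] with n hn
  have hτ : 0 < (σ2 : ℝ) / n := by positivity
  rw [gaussianReal_zero_eq_map_sqrt_mul, Measure.map_apply (measurable_const_mul _)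
    (measurableSet_le measurable_replicationBF measurable_const)]
  refine measure_mono fun z hz => ?_
  simp only [Set.mem_preimage, Set.mem_ofPred_eq, NNReal.coe_div, NNReal.coe_natCast] at hz ⊢
  rw [le_div_iff₀ hσo]
  calc exp (-z ^ 2 / 2) * σo = σo / √((σ2 : ℝ) / n) * exp (-z ^ 2 / 2) * √((σ2 : ℝ) / n) := by
        field_simp
    _ ≤ M' * √((σ2 : ℝ) / n) := by
        gcongr
        exact ((div_sqrt_mul_exp_le_replicationBF_sqrt_mul hτ z).trans hz).trans (le_max_left _ _)

/-- The limit of `BF_R / √n` as a function of the standardized replication estimate `z`. -/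
noncomputable def replicationBFLimit (θo σo σ2 z : ℝ) : ℝ :=
  √(σo ^ 2 / σ2) * exp (θo ^ 2 / (2 * σo ^ 2) - z ^ 2 / 2)

lemma replicationBFLimit_pos {σ2 : ℝ} (hσo : σo ≠ 0) (hσ2 : 0 < σ2) (z : ℝ) :
    0 < replicationBFLimit θo σo σ2 z :=
  mul_pos (Real.sqrt_pos.2 (by positivity)) (exp_pos _)

lemma measurable_replicationBFLimit (σ2 : ℝ) : Measurable (replicationBFLimit θo σo σ2) := by
  unfold replicationBFLimit; fun_prop

lemma tendsto_replicationBF_sqrt_mul_div_sqrt {σ2 : ℝ} (hσo : σo ≠ 0) (hσ2 : 0 < σ2) (z : ℝ) :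
    Tendsto (fun n : ℕ => replicationBF θo σo (σ2 / n) (√(σ2 / n) * z) / √n) atTop
      (𝓝 (replicationBFLimit θo σo σ2 z)) := by
  have hcont : ContinuousAt (fun τ => √((σo ^ 2 + τ) / σ2) *
      exp ((√τ * z - θo) ^ 2 / (2 * (σo ^ 2 + τ)) - z ^ 2 / 2)) 0 := by
    fun_prop (disch := simp [hσo])
  have hlim := hcont.tendsto.comp (tendsto_const_div_atTop_nhds_zero_nat σ2)
  simp only [Real.sqrt_zero, zero_mul, zero_sub, neg_sq, add_zero] at hlim
  refine hlim.congr' ?_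
  filter_upwards [eventually_gt_atTop 0] with n hn
  rw [Function.comp_apply, replicationBF_sqrt_mul (by positivity), mul_div_right_comm,
    ← Real.sqrt_div' _ n.cast_nonneg]
  congr 2
  field_simp

lemma tendsto_integral_replicationBF_div_sqrt (θo : ℝ) (σ2 : ℝ≥0) (hσo : σo ≠ 0) (hσ2 : 0 < σ2)
    (f : BoundedContinuousFunction ℝ ℝ) :
    Tendsto (fun n : ℕ =>
        ∫ x, f (replicationBF θo σo ((σ2 : ℝ) / n) x / √n) ∂gaussianReal 0 (σ2 / n)) atTop
      (𝓝 (∫ x, f x ∂(gaussianReal 0 1).map (replicationBFLimit θo σo σ2))) := by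
  rw [integral_map (measurable_replicationBFLimit _).aemeasurable
    f.continuous.aestronglyMeasurable]
  refine (tendsto_integral_comp_of_tendsto (gaussianReal 0 1)
    (fun n => (measurable_replicationBF.comp (measurable_const_mul _)).div_const _)
    (tendsto_replicationBF_sqrt_mul_div_sqrt hσo hσ2) f).congr fun n => ?_
  have hF : Measurable fun x => f (replicationBF θo σo ((σ2 : ℝ) / n) x / √n) :=
    f.continuous.measurable.comp (measurable_replicationBF.div_const _)
  rw [gaussianReal_zero_eq_map_sqrt_mul (σ2 / n),
    integral_map (measurable_const_mul _).aemeasurable hF.aestronglyMeasurable]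
  simp only [Function.comp_apply, NNReal.coe_div, NNReal.coe_natCast]
  rfl

end replicationBF

theorem stmt3_general (θo σo : ℝ) (σ2 : NNReal) (hσo : 0 < σo) (hσ2 : 0 < σ2) :
    (∀ M : ℝ, Tendsto (fun n : ℕ =>
        (gaussianReal 0 (σ2 / n))
          {x | nd x 0 ((σ2 : ℝ) / n) / nd x θo (σo ^ 2 + (σ2 : ℝ) / n) ≤ M})
      atTop (𝓝 0)) ∧
    (∃ μlim : Measure ℝ, IsProbabilityMeasure μlim ∧ μlim {x | 0 < x} = 1 ∧
      ∀ f : BoundedContinuousFunction ℝ ℝ,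
        Tendsto (fun n : ℕ =>
            ∫ x, f ((nd x 0 ((σ2 : ℝ) / n) / nd x θo (σo ^ 2 + (σ2 : ℝ) / n)) /
              Real.sqrt n) ∂(gaussianReal 0 (σ2 / n)))
          atTop (𝓝 (∫ x, f x ∂μlim))) := by
  have hmeas := measurable_replicationBFLimit (θo := θo) (σo := σo) σ2
  refine ⟨tendsto_gaussianReal_replicationBF_le θo σ2 hσo hσ2,
    (gaussianReal 0 1).map (replicationBFLimit θo σo σ2),
    Measure.isProbabilityMeasure_map hmeas.aemeasurable, ?_,
    tendsto_integral_replicationBF_div_sqrt θo σ2 hσo.ne' hσ2⟩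
  have hIoi : MeasurableSet {x : ℝ | 0 < x} := measurableSet_Ioi
  have hpos : replicationBFLimit θo σo σ2 ⁻¹' {x | 0 < x} = Set.univ :=
    Set.eq_univ_of_forall (replicationBFLimit_pos hσo.ne' hσ2)
  rw [Measure.map_apply hmeas hIoi, hpos, measure_univ]

theorem stmt3 (θo σo : ℝ) (σ2 : NNReal) (hθo : θo ≠ 0) (hσo : 0 < σo) (hσ2 : 0 < σ2) :
    (∀ M : ℝ, Tendsto (fun n : ℕ =>
        (gaussianReal 0 (σ2 / n))
          {x | nd x 0 ((σ2 : ℝ) / n) / nd x θo (σo ^ 2 + (σ2 : ℝ) / n) ≤ M})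
      atTop (𝓝 0)) ∧
    (∃ μlim : Measure ℝ, IsProbabilityMeasure μlim ∧ μlim {x | 0 < x} = 1 ∧
      ∀ f : BoundedContinuousFunction ℝ ℝ,
        Tendsto (fun n : ℕ =>
            ∫ x, f ((nd x 0 ((σ2 : ℝ) / n) / nd x θo (σo ^ 2 + (σ2 : ℝ) / n)) /
              Real.sqrt n) ∂(gaussianReal 0 (σ2 / n)))
          atTop (𝓝 (∫ x, f x ∂μlim))) :=
  stmt3_general θo σo σ2 hσo hσ2
end

section
/- Let θ̂_r^{(n)} | θ* ~ N(θ*, σ²/n), and let p_S(θ) = N(θ; 0, g σ_o²) and p_A(θ) = N(θ; θ̂_o, σ_o²) be the skeptical and advocate prior densities. Then the Bayes factor BF_{S:A}(θ̂_r^{(n)}; g) = N(θ̂_r^{(n)}; 0, gσ_o² + σ²/n)/N(θ̂_r^{(n)}; θ̂_o, σ_o² + σ²/n) converges in probability, as n → ∞, to the constant p_S(θ*)/p_A(θ*). In particular BF_{S:A} is not consistent: its limit is a finite positive constant regardless of θ*. -/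
open MeasureTheory ProbabilityTheory Filter Real Topology
open scoped NNReal

/-! The ratio `N(x; 0, gσ_o² + v) / N(x; θ̂_o, σ_o² + v)` is jointly continuous in `(x, v)` at
`(θ*, 0)`, since both variances stay positive there. Writing `θ̂_r = θ* + √(σ²/n) Z` with `Z`
standard normal, the Bayes factor therefore converges pointwise in `Z`, hence in probability,
to the ratio of prior densities `p_S(θ*) / p_A(θ*)`, which is finite and positive. -/

lemma nd_pos (x μ : ℝ) {τ2 : ℝ} (h : 0 < τ2) : 0 < nd x μ τ2 :=
  mul_pos (inv_pos.2 (Real.sqrt_pos.2 (by positivity))) (Real.exp_pos _)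

lemma continuousAt_nd_uncurry (μ : ℝ) {p : ℝ × ℝ} (hp : 0 < p.2) :
    ContinuousAt (fun q : ℝ × ℝ => nd q.1 μ q.2) p := by
  have hsqrt : ContinuousAt (fun q : ℝ × ℝ => (Real.sqrt (2 * Real.pi * q.2))⁻¹) p :=
    ContinuousAt.inv₀ (by fun_prop) (Real.sqrt_pos.2 (by positivity)).ne'
  have hexp : ContinuousAt (fun q : ℝ × ℝ => Real.exp (-(q.1 - μ) ^ 2 / (2 * q.2))) p :=
    Real.continuous_exp.continuousAt.comp
      (ContinuousAt.div (by fun_prop) (by fun_prop) (by positivity))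
  exact hsqrt.mul hexp

lemma tendsto_nd_div_nd {ι : Type*} {l : Filter ι} {θ μ₁ μ₂ τ₁ τ₂ : ℝ} (h₁ : 0 < τ₁)
    (h₂ : 0 < τ₂) {x w : ι → ℝ} (hx : Tendsto x l (𝓝 θ)) (hw : Tendsto w l (𝓝 0)) :
    Tendsto (fun i => nd (x i) μ₁ (τ₁ + w i) / nd (x i) μ₂ (τ₂ + w i)) l
      (𝓝 (nd θ μ₁ τ₁ / nd θ μ₂ τ₂)) := by
  have hnd {μ τ : ℝ} (hτ : 0 < τ) :
      Tendsto (fun i => nd (x i) μ (τ + w i)) l (𝓝 (nd θ μ τ)) :=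
    (continuousAt_nd_uncurry μ (p := (θ, τ)) hτ).tendsto.comp
      (hx.prodMk_nhds (by simpa using tendsto_const_nhds.add hw))
  exact (hnd h₁).div (hnd h₂) (nd_pos θ μ₂ h₂).ne'

lemma gaussianReal_eq_map_standard (μ : ℝ) (v : ℝ≥0) :
    gaussianReal μ v = (gaussianReal 0 1).map (fun z => Real.sqrt v * z + μ) := by
  change _ = (gaussianReal 0 1).map ((· + μ) ∘ (Real.sqrt v * ·))
  rw [← Measure.map_map (measurable_add_const μ) (measurable_const_mul _),
    gaussianReal_map_const_mul, mul_zero, gaussianReal_map_add_const, zero_add]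
  congr
  ext
  simp

lemma tendsto_gaussianReal_le_abs_sub {μ c ε : ℝ} {v : ℕ → ℝ≥0} (hv : Tendsto v atTop (𝓝 0))
    {f : ℕ → ℝ → ℝ} (hf : ∀ n, Measurable (f n))
    (hfc : ∀ x : ℕ → ℝ, Tendsto x atTop (𝓝 μ) → Tendsto (fun n => f n (x n)) atTop (𝓝 c))
    (hε : 0 < ε) :
    Tendsto (fun n => gaussianReal μ (v n) {x | ε ≤ |f n x - c|}) atTop (𝓝 0) := by
  set φ : ℕ → ℝ → ℝ := fun n z => Real.sqrt (v n) * z + μ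
  have hφ (z : ℝ) : Tendsto (fun n => φ n z) atTop (𝓝 μ) := by
    have hsqrt : Tendsto (fun n => Real.sqrt (v n)) atTop (𝓝 0) := by
      simpa using (NNReal.continuous_coe.tendsto 0).comp hv |>.sqrt
    simpa using (hsqrt.mul_const z).add_const μ
  have hmeas : TendstoInMeasure (gaussianReal 0 1) (fun n z => f n (φ n z)) atTop (fun _ => c) :=
    tendstoInMeasure_of_tendsto_ae (fun n => ((hf n).comp (by fun_prop)).aestronglyMeasurable)
      (ae_of_all _ fun z => hfc _ (hφ z))
  refine (tendstoInMeasure_iff_dist.1 hmeas ε hε).congr fun n => ?_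
  rw [gaussianReal_eq_map_standard μ (v n), Measure.map_apply (by fun_prop)
    (measurableSet_le measurable_const ((hf n).sub_const c).abs)]
  rfl

theorem stmt4_general (θs θo σo g : ℝ) (σ2 : NNReal) (hσo : 0 < σo) (hg : 0 < g) :
    0 < nd θs 0 (g * σo ^ 2) / nd θs θo (σo ^ 2) ∧
    ∀ ε : ℝ, 0 < ε →
      Tendsto (fun n : ℕ =>
          (gaussianReal θs (σ2 / n)) {x |
            ε ≤ |nd x 0 (g * σo ^ 2 + (σ2 : ℝ) / n) / nd x θo (σo ^ 2 + (σ2 : ℝ) / n)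
                  - nd θs 0 (g * σo ^ 2) / nd θs θo (σo ^ 2)|})
        atTop (𝓝 0) := by
  have hS : 0 < g * σo ^ 2 := by positivity
  have hA : 0 < σo ^ 2 := by positivity
  refine ⟨div_pos (nd_pos θs 0 hS) (nd_pos θs θo hA), fun ε hε => ?_⟩
  have hv : Tendsto (fun n : ℕ => σ2 / (n : ℝ≥0)) atTop (𝓝 0) :=
    tendsto_const_div_atTop_nhds_zero_nat σ2
  refine tendsto_gaussianReal_le_abs_sub hv
    (fun n => (measurable_nd _ _).div (measurable_nd _ _)) (fun x hx => ?_) hε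
  exact tendsto_nd_div_nd hS hA hx (tendsto_const_div_atTop_nhds_zero_nat (σ2 : ℝ))

theorem stmt4 (θs θo σo g : ℝ) (σ2 : NNReal) (hσo : 0 < σo) (hg : 0 < g) (hσ2 : 0 < σ2) :
    0 < nd θs 0 (g * σo ^ 2) / nd θs θo (σo ^ 2) ∧
    ∀ ε : ℝ, 0 < ε →
      Tendsto (fun n : ℕ =>
          (gaussianReal θs (σ2 / n)) {x |
            ε ≤ |nd x 0 (g * σo ^ 2 + (σ2 : ℝ) / n) / nd x θo (σo ^ 2 + (σ2 : ℝ) / n)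
                  - nd θs 0 (g * σo ^ 2) / nd θs θo (σo ^ 2)|})
        atTop (𝓝 0) :=
  stmt4_general θs θo σo g σ2 hσo hg
end

section
/- Under the mixture prior ψ δ₀ + (1−ψ) N(0, h σ_o²) for θ and likelihood θ̂_o | θ ~ N(θ, σ_o²), the p-value for prior-data conflict computed by conditioning on the latent mixture indicator equals P(θ̂_o) = ψ(1 − G₁(z_o²)) + (1−ψ)(1 − G₁(z_o²/(1+h))), where z_o = θ̂_o/σ_o and G₁ is the cdf of the chi-squared distribution with one degree of freedom. -/
/-! The density of `N(0, τ²)` is a decreasing function of `t²`, so the event `{f(T) ≤ f(θ)}` is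
`{θ² ≤ T²}`. Writing `T = τ Z` with `Z` standard normal turns it into `{θ²/τ² ≤ Z²}`, whose
probability is `1 − G₁(θ²/τ²)` because the level set `{Z² = u}` is finite, hence null. Applying
this with `τ² = σ_o²` and `τ² = σ_o²(1 + h)` gives the two terms of the mixture. -/

open MeasureTheory ProbabilityTheory Filter Real Topology

lemma nd_le_nd_iff {τ2 : ℝ} (hτ : 0 < τ2) (t x μ : ℝ) :
    nd t μ τ2 ≤ nd x μ τ2 ↔ (x - μ) ^ 2 ≤ (t - μ) ^ 2 := by
  rw [nd, nd, mul_le_mul_iff_right₀ (by positivity), Real.exp_le_exp,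
    div_le_div_iff_of_pos_right (by positivity), neg_le_neg_iff]

lemma measure_setOf_sq_eq_eq_zero {ν : Measure ℝ} (hν : ν ≪ volume) (u : ℝ) :
    ν {x | x ^ 2 = u} = 0 := by
  refine hν (measure_mono_null (t := {√u, -√u}) ?_ ((Set.toFinite _).measure_zero _))
  rintro x rfl
  have hx : |x| = √(x ^ 2) := (Real.sqrt_sq_eq_abs x).symm
  simpa using (abs_eq (Real.sqrt_nonneg _)).mp hx

lemma measureReal_setOf_le_sq_eq_one_sub {ν : Measure ℝ} [IsProbabilityMeasure ν] (hν : ν ≪ volume)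
    (u : ℝ) : ν.real {x | u ≤ x ^ 2} = 1 - ν.real {x | x ^ 2 ≤ u} := by
  have hsplit : {x : ℝ | x ^ 2 ≤ u} = {x | x ^ 2 < u} ∪ {x | x ^ 2 = u} := by
    ext x; simp [le_iff_lt_or_eq]
  have hnull : {x : ℝ | x ^ 2 = u} =ᵐ[ν] (∅ : Set ℝ) :=
    ae_eq_empty.mpr (measure_setOf_sq_eq_eq_zero hν u)
  have hcompl : {x : ℝ | u ≤ x ^ 2} = {x | x ^ 2 < u}ᶜ := by
    ext x; simp
  rw [hsplit, measureReal_congr (union_ae_eq_left_of_ae_eq_empty hnull), hcompl,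
    probReal_compl_eq_one_sub (measurableSet_lt (by fun_prop) measurable_const)]

lemma gaussianReal_real_setOf_le_sq {τ2 : ℝ} (hτ : 0 < τ2) (a : ℝ) :
    (gaussianReal 0 τ2.toNNReal).real {t | a ≤ t ^ 2}
      = (gaussianReal 0 1).real {x | a / τ2 ≤ x ^ 2} := by
  have hmap : (gaussianReal 0 1).map (√τ2 * ·) = gaussianReal 0 τ2.toNNReal := by
    rw [gaussianReal_map_const_mul]
    congr 1
    · simp
    · ext; simp [Real.sq_sqrt hτ.le, Real.coe_toNNReal _ hτ.le]
  have hpre : (√τ2 * ·) ⁻¹' {t : ℝ | a ≤ t ^ 2} = {x | a / τ2 ≤ x ^ 2} := by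
    ext x
    simp only [Set.mem_preimage, Set.mem_ofPred_eq, mul_pow, Real.sq_sqrt hτ.le]
    rw [div_le_iff₀ hτ, mul_comm]
  rw [← hmap, map_measureReal_apply (by fun_prop) (measurableSet_le measurable_const (by fun_prop)),
    hpre]

lemma gaussianReal_real_setOf_nd_le_nd {τ2 : ℝ} (hτ : 0 < τ2) (x : ℝ) :
    (gaussianReal 0 τ2.toNNReal).real {t | nd t 0 τ2 ≤ nd x 0 τ2} = 1 - G1 (x ^ 2 / τ2) := by
  simp_rw [nd_le_nd_iff hτ, sub_zero]
  rw [gaussianReal_real_setOf_le_sq hτ,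
    measureReal_setOf_le_sq_eq_one_sub (gaussianReal_absolutelyContinuous 0 one_ne_zero), G1,
    measureReal_def]

theorem stmt7_general (θo σo h ψ zo : ℝ) (hσo : 0 < σo) (hh : 0 < h)
    (hz : zo = θo / σo) :
    ψ * ((gaussianReal 0 ((σo ^ 2).toNNReal))
          {t | nd t 0 (σo ^ 2) ≤ nd θo 0 (σo ^ 2)}).toReal
      + (1 - ψ) * ((gaussianReal 0 ((σo ^ 2 * (1 + h)).toNNReal))
          {t | nd t 0 (σo ^ 2 * (1 + h)) ≤ nd θo 0 (σo ^ 2 * (1 + h))}).toReal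
      = ψ * (1 - G1 (zo ^ 2)) + (1 - ψ) * (1 - G1 (zo ^ 2 / (1 + h))) := by
  simp_rw [← measureReal_def]
  rw [gaussianReal_real_setOf_nd_le_nd (by positivity), gaussianReal_real_setOf_nd_le_nd (by positivity), hz,
    div_pow, div_mul_eq_div_div]

theorem stmt7 (θo σo h ψ zo : ℝ) (hσo : 0 < σo) (hh : 0 < h) (hψ0 : 0 ≤ ψ) (hψ1 : ψ ≤ 1)
    (hz : zo = θo / σo) :
    ψ * ((gaussianReal 0 ((σo ^ 2).toNNReal))
          {t | nd t 0 (σo ^ 2) ≤ nd θo 0 (σo ^ 2)}).toReal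
      + (1 - ψ) * ((gaussianReal 0 ((σo ^ 2 * (1 + h)).toNNReal))
          {t | nd t 0 (σo ^ 2 * (1 + h)) ≤ nd θo 0 (σo ^ 2 * (1 + h))}).toReal
      = ψ * (1 - G1 (zo ^ 2)) + (1 - ψ) * (1 - G1 (zo ^ 2 / (1 + h))) :=
  stmt7_general θo σo h ψ zo hσo hh hz
end
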